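/- Let $f : A \to B$, $g : B \to C$, $h : C \to D$ be $R$-linear maps. Then there is an exact sequence $0 \to \ker(gf)/\ker f \to \ker(hgf)/\ker f \to \ker(hg)/\ker g$, where the first map is induced by the identity on $A$ and the second by $f$. More precisely: the map $\ker(gf)/\ker f \to \ker(hgf)/\ker f$ is injective and its image is the kernel of the map $\ker(hgf)/\ker f \to \ker(hg)/\ker g$ induced by $f$. -/

import Mathlib

open LinearMap Submodule Function

variable {R : Type*} [Ring R]

/-- The quotient `K ⧸ I` of a submodule `K` by (the part of) a submodule `I`. -/
noncomputable abbrev Hmod {X : Type*} [AddCommGroup X] [Module R X]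
    (K I : Submodule R X) : Type _ :=
  K ⧸ (I.comap K.subtype)

/-- The map `K ⧸ I → K' ⧸ I'` induced by a linear map `φ` carrying `K` into `K'`
and `I` into `I'`. -/
noncomputable def Hmap {X Y : Type*} [AddCommGroup X] [Module R X]
    [AddCommGroup Y] [Module R Y] (K I : Submodule R X) (K' I' : Submodule R Y)
    (φ : X →ₗ[R] Y) (h1 : ∀ x ∈ K, φ x ∈ K') (h2 : ∀ x ∈ I, φ x ∈ I') :
    Hmod K I →ₗ[R] Hmod K' I' :=
  Submodule.mapQ _ _ (φ.restrict h1) (fun x hx => by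
    simpa [LinearMap.restrict_apply] using h2 x hx)

section Hmap

variable {X Y : Type*} [AddCommGroup X] [Module R X] [AddCommGroup Y] [Module R Y]
  {K I : Submodule R X} {K' I' : Submodule R Y} {φ : X →ₗ[R] Y}
  {h1 : ∀ x ∈ K, φ x ∈ K'} {h2 : ∀ x ∈ I, φ x ∈ I'}

theorem Hmap_mk (x : K) :
    Hmap K I K' I' φ h1 h2 (Submodule.Quotient.mk x) = Submodule.Quotient.mk ⟨φ x, h1 x x.2⟩ :=
  rfl

theorem mk_mem_ker_Hmap_iff (x : K) :
    Submodule.Quotient.mk x ∈ ker (Hmap K I K' I' φ h1 h2) ↔ φ x ∈ I' := by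
  rw [mem_ker, Hmap_mk, Submodule.Quotient.mk_eq_zero, mem_comap, coe_subtype]

theorem Hmap_id_injective {K' : Submodule R X} {h1 : ∀ x ∈ K, LinearMap.id x ∈ K'}
    {h2 : ∀ x ∈ I, LinearMap.id x ∈ I} : Injective (Hmap K I K' I LinearMap.id h1 h2) := by
  rw [← ker_eq_bot, eq_bot_iff]
  intro x hx
  induction x using Submodule.Quotient.induction_on with
  | _ x =>
    rw [mk_mem_ker_Hmap_iff] at hx
    exact (Submodule.Quotient.mk_eq_zero _).2 hx

theorem mk_mem_range_Hmap_id_iff {K' : Submodule R X} {h1 : ∀ x ∈ K, LinearMap.id x ∈ K'}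
    {h2 : ∀ x ∈ I, LinearMap.id x ∈ I} (hIK : I ≤ K) (x : K') :
    Submodule.Quotient.mk x ∈ range (Hmap K I K' I LinearMap.id h1 h2) ↔ (x : X) ∈ K := by
  constructor
  · rintro ⟨y, hy⟩
    induction y using Submodule.Quotient.induction_on with
    | _ y =>
      rw [Hmap_mk, Submodule.Quotient.eq] at hy
      have hyx : (y : X) - x ∈ K := hIK hy
      simpa using K.sub_mem y.2 hyx
  · intro hx
    exact ⟨Submodule.Quotient.mk ⟨x, hx⟩, rfl⟩

end Hmap

/-- For `f : A → B`, `g : B → C`, `h : C → D` there is an exact sequence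
`0 → ker (gf)/ker f → ker (hgf)/ker f → ker (hg)/ker g`, the first map being
induced by the identity of `A` and the second by `f`. -/
theorem nested_kernels_exact {A B C D : Type*}
    [AddCommGroup A] [Module R A] [AddCommGroup B] [Module R B]
    [AddCommGroup C] [Module R C] [AddCommGroup D] [Module R D]
    (f : A →ₗ[R] B) (g : B →ₗ[R] C) (h : C →ₗ[R] D) :
    letI q1 : Hmod (ker (g ∘ₗ f)) (ker f) →ₗ[R] Hmod (ker (h ∘ₗ g ∘ₗ f)) (ker f) :=
      Hmap _ _ _ _ LinearMap.id
        (fun x hx => by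
          simp only [mem_ker, LinearMap.comp_apply, LinearMap.id_apply] at *
          rw [hx, map_zero])
        (fun x hx => hx)
    letI q2 : Hmod (ker (h ∘ₗ g ∘ₗ f)) (ker f) →ₗ[R] Hmod (ker (h ∘ₗ g)) (ker g) :=
      Hmap _ _ _ _ f
        (fun x hx => by simpa [mem_ker] using hx)
        (fun x hx => by
          simp only [mem_ker] at *
          rw [hx, map_zero])
    Injective q1 ∧ range q1 = ker q2 := by
  refine ⟨Hmap_id_injective, ?_⟩
  ext x
  induction x using Submodule.Quotient.induction_on with
  | _ a =>
    rw [mk_mem_range_Hmap_id_iff (ker_le_ker_comp f g), mk_mem_ker_Hmap_iff]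
    rfl
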